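/- Let k be a field of characteristic 3, let ε₀, φ₀ ∈ k with ε₀ ≠ 0 and φ₀ ≠ 0, and let φ₁, φ₂, φ₃, γ₁, γ₂, γ₃, γ₄, γ₅ ∈ k. Set b₂ = ε₀t, b₄ = t(φ₃t³ + φ₂t² + φ₁t + φ₀), b₆ = t(γ₅t⁵ + γ₄t⁴ + γ₃t³ + γ₂t² + γ₁t), and Δ = −b₂²(b₂b₆ − b₄²) + b₄³. Then the coefficient of t⁴ in Δ equals ε₀²φ₀², which is nonzero; consequently, for all α, a, b ∈ k one has Δ ≠ α·t³(t−a)³(t−b)³, since every monomial of α·t³(t−a)³(t−b)³ has exponent divisible by 3. (This shows the configurations III X I₃ I₃ and III X I₆, with a type III fibre over t = 0 and X an additive fibre of type III or II over ∞, do not exist on a rational elliptic surface in characteristic 3.) -/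

import Mathlib

/-!
In characteristic `p`, a `p`-th power `f ^ p` is `expand p f` with Frobenius applied to the
coefficients, so `C α * (t (t - a) (t - b)) ^ 3` only has monomials of degree divisible by 3.
On the other hand, with `b₂ = ε₀ t`, `t ∣ b₄` and `t² ∣ b₆`, the coefficient of `t⁴` in `Δ`
comes only from `b₂² b₄²` (the term `b₄³` is itself a cube), so it equals `ε₀² φ₀² ≠ 0`.
-/

open Polynomial

namespace Polynomial

variable {R : Type*}

theorem coeff_pow_expChar_eq_zero [CommSemiring R] {p : ℕ} [ExpChar R p] (f : R[X]) {n : ℕ}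
    (hn : ¬p ∣ n) : (f ^ p).coeff n = 0 := by
  rw [← map_frobenius_expand, coeff_map, coeff_expand (expChar_pos R p), if_neg hn, map_zero]

theorem coeff_C_mul_pow_expChar_eq_zero [CommSemiring R] {p : ℕ} [ExpChar R p] (α : R)
    (f : R[X]) {n : ℕ} (hn : ¬p ∣ n) : (C α * f ^ p).coeff n = 0 := by
  rw [coeff_C_mul, coeff_pow_expChar_eq_zero f hn, mul_zero]

end Polynomial

noncomputable def weierstrassDisc {R : Type*} [CommRing R] (b₂ b₄ b₆ : R[X]) : R[X] :=
  -b₂ ^ 2 * (b₂ * b₆ - b₄ ^ 2) + b₄ ^ 3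

theorem coeff_four_weierstrassDisc {R : Type*} [CommRing R] [ExpChar R 3] (ε : R)
    (u b₆ : R[X]) (hb₆ : X ^ 2 ∣ b₆) :
    (weierstrassDisc (C ε * X) (X * u) b₆).coeff 4 = ε ^ 2 * u.coeff 0 ^ 2 := by
  obtain ⟨w, rfl⟩ := hb₆
  have hΔ : weierstrassDisc (C ε * X) (X * u) (X ^ 2 * w) =
      (C ε ^ 2 * u ^ 2 - X * (C ε ^ 3 * w)) * X ^ 4 + (X * u) ^ 3 := by
    rw [weierstrassDisc]
    ring
  rw [hΔ, coeff_add, coeff_pow_expChar_eq_zero _ (by norm_num), add_zero, ← zero_add 4,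
    coeff_mul_X_pow, coeff_zero_eq_eval_zero, coeff_zero_eq_eval_zero]
  simp

theorem stmt13 {k : Type*} [Field k] [CharP k 3]
    (ε₀ : k) (hε₀ : ε₀ ≠ 0) (φ₀ : k) (hφ₀ : φ₀ ≠ 0)
    (φ₁ φ₂ φ₃ γ₁ γ₂ γ₃ γ₄ γ₅ : k)
    (b₂ b₄ b₆ Δ : k[X])
    (hb₂ : b₂ = C ε₀ * X)
    (hb₄ : b₄ = X * (C φ₃ * X ^ 3 + C φ₂ * X ^ 2 + C φ₁ * X + C φ₀))
    (hb₆ : b₆ = X * (C γ₅ * X ^ 5 + C γ₄ * X ^ 4 + C γ₃ * X ^ 3 + C γ₂ * X ^ 2 + C γ₁ * X))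
    (hΔ : Δ = -b₂ ^ 2 * (b₂ * b₆ - b₄ ^ 2) + b₄ ^ 3) :
    Δ.coeff 4 = ε₀ ^ 2 * φ₀ ^ 2 ∧ ε₀ ^ 2 * φ₀ ^ 2 ≠ 0 ∧
    (∀ (α a b : k) (n : ℕ), ¬ (3 ∣ n) →
      (C α * (X ^ 3 * (X - C a) ^ 3 * (X - C b) ^ 3)).coeff n = 0) ∧
    (∀ α a b : k, Δ ≠ C α * (X ^ 3 * (X - C a) ^ 3 * (X - C b) ^ 3)) := by
  have hcube : ∀ (α a b : k) (n : ℕ), ¬ (3 ∣ n) →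
      (C α * (X ^ 3 * (X - C a) ^ 3 * (X - C b) ^ 3)).coeff n = 0 := fun α a b n hn => by
    rw [← mul_pow, ← mul_pow]
    exact coeff_C_mul_pow_expChar_eq_zero α _ hn
  have hb₆' : X ^ 2 ∣ b₆ :=
    ⟨C γ₅ * X ^ 4 + C γ₄ * X ^ 3 + C γ₃ * X ^ 2 + C γ₂ * X + C γ₁, by rw [hb₆]; ring⟩
  have h4 : Δ.coeff 4 = ε₀ ^ 2 * φ₀ ^ 2 := by
    rw [show Δ = weierstrassDisc b₂ b₄ b₆ from hΔ, hb₂, hb₄,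
      coeff_four_weierstrassDisc ε₀ _ b₆ hb₆']
    simp
  have hne : ε₀ ^ 2 * φ₀ ^ 2 ≠ 0 := mul_ne_zero (pow_ne_zero _ hε₀) (pow_ne_zero _ hφ₀)
  refine ⟨h4, hne, hcube, fun α a b h => hne ?_⟩
  rw [← h4, h, hcube α a b 4 (by norm_num)]
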